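/- arXiv:2011.05635 — 2 statements merged into one kernel-verified Lean document; each statement's English description precedes it below -/
import Mathlib

section
/- Let a ∈ ℝ, ε = ±1, and define F(ξ) = (εa/2)(1 − coth(aξ/2)). Then F satisfies F''(ξ) = 2 F(ξ)³ − 2a² F(ξ) − 3a F'(ξ) at every point ξ with sinh(aξ/2) ≠ 0. -/
/-- The real hyperbolic cotangent. -/
noncomputable def coth (x : ℝ) : ℝ := Real.cosh x / Real.sinh x

/-!
With `ε² = 1`, `F = (εa/2)(1 - coth(aξ/2))` solves the Riccati equation `F' = εF² - aF`, because
`coth' = 1 - coth²`. Differentiating once more gives `F'' = (2εF - a)(εF² - aF)`, which expands to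
`2F³ - 2a²F - 3aF'`.
-/

open Filter Topology

theorem hasDerivAt_coth {x : ℝ} (hx : Real.sinh x ≠ 0) :
    HasDerivAt coth (1 - coth x ^ 2) x := by
  refine ((Real.hasDerivAt_cosh x).div (Real.hasDerivAt_sinh x) hx).congr_deriv ?_
  have hcosh_sq := Real.cosh_sq x
  unfold coth
  field_simp

theorem hasDerivAt_deriv_of_riccati {F : ℝ → ℝ} {b c ξ : ℝ}
    (hF : ∀ᶠ x in 𝓝 ξ, HasDerivAt F (b * F x ^ 2 - c * F x) x) :
    HasDerivAt (deriv F) ((2 * b * F ξ - c) * (b * F ξ ^ 2 - c * F ξ)) ξ := by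
  have hderiv : deriv F =ᶠ[𝓝 ξ] fun x => b * F x ^ 2 - c * F x :=
    hF.mono fun x hx => hx.deriv
  have hFξ : HasDerivAt F (b * F ξ ^ 2 - c * F ξ) ξ := hF.self_of_nhds
  refine (((hFξ.pow 2).const_mul b).sub (hFξ.const_mul c)).congr_of_eventuallyEq hderiv
    |>.congr_deriv ?_
  push_cast
  ring

theorem hasDerivAt_of_eq_mul_one_sub_coth {F : ℝ → ℝ} {a ε x : ℝ}
    (hF : ∀ y, F y = ε * a / 2 * (1 - coth (a * y / 2))) (hε : ε ^ 2 = 1)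
    (hx : Real.sinh (a * x / 2) ≠ 0) :
    HasDerivAt F (ε * F x ^ 2 - a * F x) x := by
  have hlin : HasDerivAt (fun y : ℝ => a * y / 2) (a / 2) x := by
    simpa using ((hasDerivAt_id x).const_mul a).div_const 2
  rw [funext hF]
  refine (((hasDerivAt_coth hx).comp x hlin).const_sub 1 |>.const_mul (ε * a / 2)).congr_deriv ?_
  have hε3 : ε ^ 3 = ε := by rw [pow_succ, hε, one_mul]
  linear_combination (-a ^ 2 / 4 * (1 - coth (a * x / 2)) ^ 2) * hε3

theorem aux_ode2_coth_solution
    (a ε : ℝ) (hε : ε = 1 ∨ ε = -1) (F : ℝ → ℝ)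
    (hF : ∀ ξ, F ξ = ε * a / 2 * (1 - coth (a * ξ / 2)))
    (ξ : ℝ) (hξ : Real.sinh (a * ξ / 2) ≠ 0) :
    deriv (deriv F) ξ = 2 * F ξ ^ 3 - 2 * a ^ 2 * F ξ - 3 * a * deriv F ξ := by
  have hε2 : ε ^ 2 = 1 := by rcases hε with rfl | rfl <;> norm_num
  have hsinh : ∀ᶠ x in 𝓝 ξ, Real.sinh (a * x / 2) ≠ 0 :=
    (Real.continuous_sinh.comp ((continuous_const.mul continuous_id).div_const 2)).continuousAt
      |>.eventually_ne hξ
  have hriccati : ∀ᶠ x in 𝓝 ξ, HasDerivAt F (ε * F x ^ 2 - a * F x) x :=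
    hsinh.mono fun x hx => hasDerivAt_of_eq_mul_one_sub_coth hF hε2 hx
  rw [(hasDerivAt_deriv_of_riccati hriccati).deriv, hriccati.self_of_nhds.deriv]
  linear_combination 2 * F ξ ^ 3 * hε2
end

section
/- Let λ, μ, ν, ω be real numbers with λ ≠ 0 and ν ≠ 0, and define u(ξ) = −(3μ²/(25λν)) [1 − tanh(μξ/(10ν))]² + (6μ² − 25ων)/(25λν). Then u satisfies the traveling-wave KdV–Burgers ODE ω u' + λ u u' + μ u'' + ν u''' = 0 for all ξ ∈ ℝ. -/
/-!
Tanh method: `T = tanh (c ξ)` satisfies `T' = c (1 - T²)`, so every derivative of a polynomial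
in `T` is again a polynomial in `T`. With `c = μ / (10 ν)` the travelling-wave equation for
`u = A (1 - T)² + B` thus becomes an identity between polynomials in `T`, checked by
clearing denominators.
-/

open Polynomial

theorem Real.hasDerivAt_tanh (x : ℝ) : HasDerivAt Real.tanh (1 - Real.tanh x ^ 2) x := by
  have hcosh : Real.cosh x ≠ 0 := (Real.cosh_pos x).ne'
  have h := (Real.hasDerivAt_sinh x).div (Real.hasDerivAt_cosh x) hcosh
  rw [show Real.tanh = Real.sinh / Real.cosh from funext Real.tanh_eq_sinh_div_cosh]
  refine h.congr_deriv ?_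
  rw [Pi.div_apply, div_pow, one_sub_div (pow_ne_zero 2 hcosh)]
  ring

/-- Since `tanh' = 1 - tanh²`, the chain rule turns `d/dx` acting on `p (tanh (c x))` into this
operator acting on `p`. -/
noncomputable def tanhDerivation (c : ℝ) (p : ℝ[X]) : ℝ[X] :=
  C c * (1 - X ^ 2) * derivative p

theorem hasDerivAt_eval_tanh (c : ℝ) (p : ℝ[X]) (x : ℝ) :
    HasDerivAt (fun y => p.eval (Real.tanh (c * y)))
      ((tanhDerivation c p).eval (Real.tanh (c * x))) x := by
  refine ((p.hasDerivAt _).comp x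
    ((Real.hasDerivAt_tanh _).comp x ((hasDerivAt_id x).const_mul c))).congr_deriv ?_
  simp only [Function.comp_apply, id, tanhDerivation, eval_mul, eval_C, eval_sub, eval_one,
    eval_pow, eval_X]
  ring

theorem deriv_eval_tanh (c : ℝ) (p : ℝ[X]) :
    deriv (fun y => p.eval (Real.tanh (c * y))) =
      fun y => (tanhDerivation c p).eval (Real.tanh (c * y)) :=
  funext fun x => (hasDerivAt_eval_tanh c p x).deriv

/-- The profile `u = A (1 - T)² + B` of the travelling wave, as a polynomial in `T = tanh`. -/
noncomputable def kdvBurgersProfile (lam mu nu omega : ℝ) : ℝ[X] :=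
  C (-(3 * mu ^ 2 / (25 * lam * nu))) * (1 - X) ^ 2
    + C ((6 * mu ^ 2 - 25 * omega * nu) / (25 * lam * nu))

theorem eval_kdvBurgers_tanhDerivation_profile_eq_zero {lam nu : ℝ} (hlam : lam ≠ 0)
    (hnu : nu ≠ 0) (mu omega t : ℝ) :
    let p := kdvBurgersProfile lam mu nu omega
    let D := tanhDerivation (mu / (10 * nu))
    omega * (D p).eval t + lam * p.eval t * (D p).eval t + mu * (D (D p)).eval t
      + nu * (D (D (D p))).eval t = 0 := by
  simp only [kdvBurgersProfile, tanhDerivation, derivative_mul, derivative_add, derivative_sub,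
    derivative_pow, derivative_C, derivative_X, derivative_one, derivative_zero, eval_mul,
    eval_add, eval_sub, eval_pow, eval_C, eval_X, eval_one, eval_zero]
  field_simp
  ring

theorem kdv_burgers_tanh_solution
    (lam mu nu omega : ℝ) (hlam : lam ≠ 0) (hnu : nu ≠ 0) (u : ℝ → ℝ)
    (hu : ∀ ξ, u ξ =
      -(3 * mu ^ 2 / (25 * lam * nu)) * (1 - Real.tanh (mu * ξ / (10 * nu))) ^ 2
        + (6 * mu ^ 2 - 25 * omega * nu) / (25 * lam * nu))
    (ξ : ℝ) :
    omega * deriv u ξ + lam * u ξ * deriv u ξ + mu * deriv (deriv u) ξ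
      + nu * deriv (deriv (deriv u)) ξ = 0 := by
  have hu' :
      u = fun y => (kdvBurgersProfile lam mu nu omega).eval (Real.tanh (mu / (10 * nu) * y)) := by
    funext y
    rw [hu, show mu / (10 * nu) * y = mu * y / (10 * nu) by ring]
    simp [kdvBurgersProfile]
  simp only [hu', deriv_eval_tanh]
  exact eval_kdvBurgers_tanhDerivation_profile_eq_zero hlam hnu mu omega _
end
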